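/- Let n ≥ 1 and let V be an n × n unitary matrix all of whose entries lie in the ring ℤ[1/2, i] = {x₀ + x₁·i : x₀, x₁ ∈ ℤ[1/2]}. Then there exist finitely many generators G₁, …, G_ℓ, each taken from the set {i_[a], X_[a,b], (ωH)_[a,b] : a, b distinct elements of {1,…,n}}, such that G₁ ⋯ G_ℓ V = I. -/

import Mathlib

open Matrix Complex

noncomputable section

/-- The `m`-level operator of type `W` with indices `f 0, …, f (m-1)`:
for injective `f`, its `(f j', f k')` entry is `W j' k'` and it agrees
with the identity matrix elsewhere. -/
def levelOp {n m : ℕ} (f : Fin m → Fin n) (W : Matrix (Fin m) (Fin m) ℂ) :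
    Matrix (Fin n) (Fin n) ℂ := fun j k =>
  (∑ j' : Fin m, ∑ k' : Fin m, if f j' = j ∧ f k' = k then W j' k' else 0) +
  (if j = k ∧ ∀ j' : Fin m, f j' ≠ j then 1 else 0)

/-- The NOT gate `X`. -/
def Xmat : Matrix (Fin 2) (Fin 2) ℂ := !![0, 1; 1, 0]

/-- The Hadamard gate `H`. -/
def Hmat : Matrix (Fin 2) (Fin 2) ℂ := (Real.sqrt 2 : ℂ)⁻¹ • !![1, 1; 1, -1]

/-- The gate `ωH = ((1+i)/2)[[1,1],[1,-1]]`, where `ω = e^{iπ/4}`. -/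
def omegaHmat : Matrix (Fin 2) (Fin 2) ℂ :=
  ((1 + Complex.I) / 2) • !![1, 1; 1, -1]

/-- `G` is one of the generators `i_[a]`, `X_[a,b]`, `(ωH)_[a,b]` with `a ≠ b`. -/
def IsGaussGen {n : ℕ} (G : Matrix (Fin n) (Fin n) ℂ) : Prop :=
  (∃ a : Fin n, G = levelOp ![a] !![Complex.I]) ∨
  (∃ a b : Fin n, a ≠ b ∧ G = levelOp ![a, b] Xmat) ∨
  (∃ a b : Fin n, a ≠ b ∧ G = levelOp ![a, b] omegaHmat)

/-- `x` is a dyadic fraction: an element of `ℤ[1/2]` (viewed inside `ℂ`). -/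
def IsDyadic (x : ℂ) : Prop := ∃ (u : ℤ) (q : ℕ), x = (u : ℂ) / 2 ^ q

/-- `x` belongs to the ring `ℤ[1/2, i] = {x₀ + x₁·i : x₀, x₁ ∈ ℤ[1/2]}`. -/
def InDi (x : ℂ) : Prop :=
  ∃ x₀ x₁ : ℂ, IsDyadic x₀ ∧ IsDyadic x₁ ∧ x = x₀ + x₁ * Complex.I

/-!
Write a column of `V` as `u / (1 + i)^k` with `u` a vector of Gaussian integers; since the column
is a unit vector and `|1 + i|² = 2`, the norms satisfy `∑ N(u_j) = 2^k`. If every `u_j` is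
divisible by `1 + i`, then `k` drops by one. Otherwise the sum is even, so there are two entries
`u_a, u_b` of odd norm; these are congruent mod 2 up to a power of `i`, and after rotating `u_b` by
that power, `(ωH)_[a,b]` replaces them by `(1 + i)(u_a ± u_b)/2`, which have even norm, without
changing `∑ N(u_j)`. When `k = 0` a single entry is a unit, which `i_[a]` and `X_[a,b]` turn into
the `1` on the diagonal. Reducing the columns one after another, with generators that only touch
the rows not yet fixed, brings `V` to the identity: a unitary matrix whose `c`-th column is `e_c`
also has `e_c` as its `c`-th row, so later steps leave the reduced columns alone.
-/

local notation "ℤ[i]" => GaussianInt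

section LevelOp

variable {n m : ℕ} {f : Fin m → Fin n}

theorem levelOp_apply_apply (hf : Function.Injective f) (W : Matrix (Fin m) (Fin m) ℂ)
    (j k : Fin m) : levelOp f W (f j) (f k) = W j k := by
  rw [levelOp, if_neg fun h => h.2 j rfl, add_zero, Finset.sum_eq_single j, Finset.sum_eq_single k]
  · simp
  · intro k' _ hk'
    simp [hf.ne hk']
  · simp
  · intro j' _ hj'
    simp [hf.ne hj']
  · simp

theorem levelOp_apply_of_notMem_range_left (W : Matrix (Fin m) (Fin m) ℂ) {j : Fin n}
    (hj : j ∉ Set.range f) (k : Fin n) : levelOp f W j k = (1 : Matrix (Fin n) (Fin n) ℂ) j k := by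
  simp only [Set.mem_range, not_exists] at hj
  simp [levelOp, hj, one_apply]

theorem levelOp_apply_of_notMem_range_right (W : Matrix (Fin m) (Fin m) ℂ) (j : Fin n)
    {k : Fin n} (hk : k ∉ Set.range f) : levelOp f W j k = (1 : Matrix (Fin n) (Fin n) ℂ) j k := by
  simp only [Set.mem_range, not_exists] at hk
  by_cases hjk : j = k
  · subst hjk
    simp [levelOp, hk, one_apply]
  · simp [levelOp, hk, one_apply, hjk]

theorem levelOp_mulVec_apply (hf : Function.Injective f) (W : Matrix (Fin m) (Fin m) ℂ)
    (v : Fin n → ℂ) (j : Fin m) : (levelOp f W *ᵥ v) (f j) = ∑ k, W j k * v (f k) := by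
  rw [mulVec, dotProduct]
  refine (Fintype.sum_of_injective f hf _ _ (fun k hk => ?_) fun k => ?_).symm
  · rw [levelOp_apply_of_notMem_range_right _ _ hk, one_apply_ne, zero_mul]
    rintro rfl
    exact hk ⟨j, rfl⟩
  · rw [levelOp_apply_apply hf]

theorem levelOp_mulVec_apply_of_notMem_range (W : Matrix (Fin m) (Fin m) ℂ) (v : Fin n → ℂ)
    {j : Fin n} (hj : j ∉ Set.range f) : (levelOp f W *ᵥ v) j = v j := by
  conv_rhs => rw [← one_mulVec v]
  simp only [mulVec, dotProduct, levelOp_apply_of_notMem_range_left W hj]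

theorem levelOp_mulVec_eq_self (hf : Function.Injective f) (W : Matrix (Fin m) (Fin m) ℂ)
    {v : Fin n → ℂ} (hv : ∀ j, v (f j) = 0) : levelOp f W *ᵥ v = v := by
  ext j
  by_cases hj : j ∈ Set.range f
  · obtain ⟨j, rfl⟩ := hj
    simp [levelOp_mulVec_apply hf, hv]
  · exact levelOp_mulVec_apply_of_notMem_range W v hj

theorem levelOp_mul (hf : Function.Injective f) (A B : Matrix (Fin m) (Fin m) ℂ) :
    levelOp f A * levelOp f B = levelOp f (A * B) := by
  refine ext_iff_mulVec.2 fun v => funext fun j => ?_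
  rw [← mulVec_mulVec]
  by_cases hj : j ∈ Set.range f
  · obtain ⟨j, rfl⟩ := hj
    simp only [levelOp_mulVec_apply hf, mul_apply, Finset.mul_sum, Finset.sum_mul, mul_assoc]
    exact Finset.sum_comm
  · simp only [levelOp_mulVec_apply_of_notMem_range _ _ hj]

theorem levelOp_one (hf : Function.Injective f) : levelOp f (1 : Matrix (Fin m) (Fin m) ℂ) = 1 := by
  refine ext_iff_mulVec.2 fun v => funext fun j => ?_
  rw [one_mulVec]
  by_cases hj : j ∈ Set.range f
  · obtain ⟨j, rfl⟩ := hj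
    simp [levelOp_mulVec_apply hf, one_apply]
  · exact levelOp_mulVec_apply_of_notMem_range _ v hj

theorem levelOp_conjTranspose (hf : Function.Injective f) (W : Matrix (Fin m) (Fin m) ℂ) :
    (levelOp f W)ᴴ = levelOp f Wᴴ := by
  ext j k
  rw [conjTranspose_apply]
  by_cases hj : j ∈ Set.range f
  · by_cases hk : k ∈ Set.range f
    · obtain ⟨j, rfl⟩ := hj
      obtain ⟨k, rfl⟩ := hk
      rw [levelOp_apply_apply hf, levelOp_apply_apply hf, conjTranspose_apply]
    · rw [levelOp_apply_of_notMem_range_left _ hk, levelOp_apply_of_notMem_range_right _ _ hk,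
        ← conjTranspose_apply, conjTranspose_one]
  · rw [levelOp_apply_of_notMem_range_right _ _ hj, levelOp_apply_of_notMem_range_left _ hj,
      ← conjTranspose_apply, conjTranspose_one]

theorem levelOp_mem_unitaryGroup (hf : Function.Injective f) {W : Matrix (Fin m) (Fin m) ℂ}
    (hW : W ∈ unitaryGroup (Fin m) ℂ) : levelOp f W ∈ unitaryGroup (Fin n) ℂ := by
  rw [mem_unitaryGroup_iff, star_eq_conjTranspose, levelOp_conjTranspose hf, levelOp_mul hf,
    ← star_eq_conjTranspose, mem_unitaryGroup_iff.1 hW, levelOp_one hf]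

theorem levelOp_mem_matrix (hf : Function.Injective f) {R : Subring ℂ}
    {W : Matrix (Fin m) (Fin m) ℂ} (hW : W ∈ R.matrix) : levelOp f W ∈ R.matrix := by
  intro j k
  by_cases hj : j ∈ Set.range f
  · by_cases hk : k ∈ Set.range f
    · obtain ⟨j, rfl⟩ := hj
      obtain ⟨k, rfl⟩ := hk
      rw [levelOp_apply_apply hf]
      exact hW j k
    · rw [levelOp_apply_of_notMem_range_right _ _ hk]
      exact (Subring.matrix R).one_mem j k
  · rw [levelOp_apply_of_notMem_range_left _ hj]
    exact (Subring.matrix R).one_mem j k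

end LevelOp

namespace GaussianInt

theorem toComplex_one_add_I : ((⟨1, 1⟩ : ℤ[i]) : ℂ) = 1 + I := by
  simp [toComplex_def]

theorem one_add_I_mem_range_toComplex : 1 + I ∈ toComplex.range :=
  ⟨⟨1, 1⟩, toComplex_one_add_I⟩

theorem odd_norm_iff (u : ℤ[i]) : Odd u.norm ↔ Odd (u.re + u.im) := by
  simp [Zsqrtd.norm_def, Int.odd_add, Int.odd_mul, parity_simps]

theorem one_add_I_dvd_of_even_norm {u : ℤ[i]} (hu : Even u.norm) : (⟨1, 1⟩ : ℤ[i]) ∣ u := by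
  rw [← Int.not_odd_iff_even, odd_norm_iff, Int.not_odd_iff_even, Int.even_iff] at hu
  exact ⟨⟨(u.re + u.im) / 2, (u.im - u.re) / 2⟩, by ext <;> simp <;> omega⟩

theorem exists_two_dvd_sub_I_pow_mul {u v : ℤ[i]} (hu : Odd u.norm) (hv : Odd v.norm) :
    ∃ s : ℕ, 2 ∣ u - ⟨0, 1⟩ ^ s * v := by
  rw [odd_norm_iff, Int.odd_iff] at hu hv
  by_cases h : u.re % 2 = v.re % 2
  · exact ⟨0, ⟨⟨(u.re - v.re) / 2, (u.im - v.im) / 2⟩, by ext <;> simp <;> omega⟩⟩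
  · exact ⟨1, ⟨⟨(u.re + v.im) / 2, (u.im - v.re) / 2⟩, by ext <;> simp <;> omega⟩⟩

theorem norm_one_add_I_mul (w : ℤ[i]) : ((⟨1, 1⟩ : ℤ[i]) * w).norm = 2 * w.norm := by
  rw [Zsqrtd.norm_mul]
  rfl

theorem norm_I_pow_mul (s : ℕ) (v : ℤ[i]) : ((⟨0, 1⟩ : ℤ[i]) ^ s * v).norm = v.norm := by
  induction s with
  | zero => simp
  | succ s ih => rw [pow_succ', mul_assoc, Zsqrtd.norm_mul, ih]; simp [Zsqrtd.norm_def]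

theorem norm_one_add_I_mul_add_norm {p q w₁ w₂ : ℤ[i]} (h₁ : p + q = 2 * w₁)
    (h₂ : p - q = 2 * w₂) :
    ((⟨1, 1⟩ : ℤ[i]) * w₁).norm + ((⟨1, 1⟩ : ℤ[i]) * w₂).norm = p.norm + q.norm := by
  have hpar : (p + q).norm + (p - q).norm = 2 * p.norm + 2 * q.norm := by
    simp only [Zsqrtd.norm_def, Zsqrtd.re_add, Zsqrtd.im_add, Zsqrtd.re_sub, Zsqrtd.im_sub]
    ring
  have hnorm_two : (2 : ℤ[i]).norm = 4 := rfl
  rw [h₁, h₂, Zsqrtd.norm_mul, Zsqrtd.norm_mul, hnorm_two] at hpar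
  rw [norm_one_add_I_mul, norm_one_add_I_mul]
  linarith

theorem exists_I_pow_mul_eq_one {u : ℤ[i]} (hu : u.norm = 1) :
    ∃ t : ℕ, (⟨0, 1⟩ : ℤ[i]) ^ t * u = 1 := by
  obtain ⟨x, y⟩ := u
  simp only [Zsqrtd.norm_def] at hu
  have hx : x = -1 ∨ x = 0 ∨ x = 1 := by
    have : x * x ≤ 1 := by nlinarith [mul_self_nonneg y]
    have : -1 ≤ x ∧ x ≤ 1 := ⟨by nlinarith, by nlinarith⟩
    omega
  have hy : y = -1 ∨ y = 0 ∨ y = 1 := by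
    have : y * y ≤ 1 := by nlinarith [mul_self_nonneg x]
    have : -1 ≤ y ∧ y ≤ 1 := ⟨by nlinarith, by nlinarith⟩
    omega
  rcases hx with rfl | rfl | rfl <;> rcases hy with rfl | rfl | rfl <;> norm_num at hu
  exacts [⟨2, by decide⟩, ⟨1, by decide⟩, ⟨3, by decide⟩, ⟨0, by decide⟩]

end GaussianInt

-- `ℤ[1/2, i] = ℤ[i][(1 + i)⁻¹]` because `(1 + i)² = 2i`; the powers of `1 + i` in the denominators
-- are what the column reduction lowers one at a time.
def dyadicGaussian : Subring ℂ where
  carrier := {x | ∃ q : ℕ, (1 + I) ^ q * x ∈ GaussianInt.toComplex.range}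
  zero_mem' := ⟨0, by simp [zero_mem]⟩
  one_mem' := ⟨0, by simp [one_mem]⟩
  add_mem' := by
    rintro x y ⟨q, hx⟩ ⟨r, hy⟩
    refine ⟨q + r, ?_⟩
    have hlam := GaussianInt.one_add_I_mem_range_toComplex
    convert add_mem (mul_mem (pow_mem hlam r) hx) (mul_mem (pow_mem hlam q) hy) using 1
    ring
  mul_mem' := by
    rintro x y ⟨q, hx⟩ ⟨r, hy⟩
    exact ⟨q + r, by rw [pow_add, mul_mul_mul_comm]; exact mul_mem hx hy⟩
  neg_mem' := by
    rintro x ⟨q, hx⟩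
    exact ⟨q, by rw [mul_neg]; exact neg_mem hx⟩

theorem I_mem_dyadicGaussian : I ∈ dyadicGaussian :=
  ⟨0, ⟨⟨0, 1⟩, by simp [GaussianInt.toComplex_def]⟩⟩

theorem inv_two_mem_dyadicGaussian : (2 : ℂ)⁻¹ ∈ dyadicGaussian :=
  ⟨2, ⟨⟨0, 1⟩, by
    rw [GaussianInt.toComplex_def']
    push_cast
    linear_combination (-1 / 2 : ℂ) * I_sq⟩⟩

theorem InDi.mem_dyadicGaussian {x : ℂ} (hx : InDi x) : x ∈ dyadicGaussian := by
  have hdyadic : ∀ {y : ℂ}, IsDyadic y → y ∈ dyadicGaussian := by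
    rintro _ ⟨u, q, rfl⟩
    rw [div_eq_mul_inv, ← inv_pow]
    exact mul_mem (intCast_mem _ u) (pow_mem inv_two_mem_dyadicGaussian q)
  obtain ⟨x₀, x₁, h₀, h₁, rfl⟩ := hx
  exact add_mem (hdyadic h₀) (mul_mem (hdyadic h₁) I_mem_dyadicGaussian)

theorem exists_pow_mul_eq_toComplex {n : ℕ} {v : Fin n → ℂ} (hv : ∀ j, v j ∈ dyadicGaussian) :
    ∃ (K : ℕ) (u : Fin n → ℤ[i]), ∀ j, (1 + I) ^ K * v j = u j := by
  choose q u hu using hv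
  have hq : ∀ j, q j ≤ Finset.univ.sup q := fun j => Finset.le_sup (Finset.mem_univ j)
  refine ⟨Finset.univ.sup q, fun j => ⟨1, 1⟩ ^ (Finset.univ.sup q - q j) * u j, fun j => ?_⟩
  rw [map_mul, map_pow, GaussianInt.toComplex_one_add_I, hu, ← mul_assoc, ← pow_add,
    Nat.sub_add_cancel (hq j)]

section Gates

variable {n : ℕ}

theorem injective_vec_pair {a b : Fin n} (hab : a ≠ b) : Function.Injective ![a, b] :=
  Fin.cons_injective_iff.2 ⟨by simpa using hab, Function.injective_of_subsingleton _⟩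

theorem levelOp_singleton_mulVec (a : Fin n) (W : Matrix (Fin 1) (Fin 1) ℂ) (v : Fin n → ℂ) :
    levelOp ![a] W *ᵥ v = Function.update v a (W 0 0 * v a) := by
  funext j
  by_cases hj : j = a
  · subst hj
    simpa using levelOp_mulVec_apply (Function.injective_of_subsingleton ![j]) W v 0
  · rw [Function.update_of_ne hj]
    exact levelOp_mulVec_apply_of_notMem_range W v (by simpa [eq_comm] using hj)

theorem levelOp_pair_mulVec {a b : Fin n} (hab : a ≠ b) (W : Matrix (Fin 2) (Fin 2) ℂ)
    (v : Fin n → ℂ) :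
    levelOp ![a, b] W *ᵥ v = Function.update (Function.update v a (W 0 0 * v a + W 0 1 * v b))
      b (W 1 0 * v a + W 1 1 * v b) := by
  funext j
  by_cases hjb : j = b
  · subst hjb
    simpa using levelOp_mulVec_apply (injective_vec_pair hab) W v 1
  by_cases hja : j = a
  · subst hja
    simpa [hab] using levelOp_mulVec_apply (injective_vec_pair hab) W v 0
  rw [Function.update_of_ne hjb, Function.update_of_ne hja]
  exact levelOp_mulVec_apply_of_notMem_range W v (by rintro ⟨k, rfl⟩; fin_cases k <;> simp_all)

theorem levelOp_I_pow_mulVec (a : Fin n) (t : ℕ) (v : Fin n → ℂ) :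
    levelOp ![a] !![I] ^ t *ᵥ v = Function.update v a (I ^ t * v a) := by
  induction t with
  | zero => simp
  | succ t ih =>
    rw [pow_succ', ← mulVec_mulVec, ih, levelOp_singleton_mulVec]
    simp [pow_succ', mul_assoc]

theorem levelOp_Xmat_mulVec_single {a b : Fin n} (hab : a ≠ b) :
    levelOp ![a, b] Xmat *ᵥ Pi.single b 1 = Pi.single a 1 := by
  rw [levelOp_pair_mulVec hab]
  funext j
  by_cases hjb : j = b
  · subst hjb
    simp [Xmat, hab]
  by_cases hja : j = a
  · subst hja
    simp [Xmat, hab]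
  simp [Function.update_of_ne, hja, hjb]

theorem levelOp_omegaHmat_mulVec {a b : Fin n} (hab : a ≠ b) (v : Fin n → ℂ) :
    levelOp ![a, b] omegaHmat *ᵥ v = Function.update (Function.update v a
      ((1 + I) / 2 * (v a + v b))) b ((1 + I) / 2 * (v a - v b)) := by
  rw [levelOp_pair_mulVec hab]
  congr 2 <;> simp [omegaHmat] <;> ring

def IsGaussGenOn (S : Set (Fin n)) (G : Matrix (Fin n) (Fin n) ℂ) : Prop :=
  (∃ a ∈ S, G = levelOp ![a] !![I]) ∨
  (∃ a ∈ S, ∃ b ∈ S, a ≠ b ∧ G = levelOp ![a, b] Xmat) ∨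
  (∃ a ∈ S, ∃ b ∈ S, a ≠ b ∧ G = levelOp ![a, b] omegaHmat)

theorem IsGaussGenOn.isGaussGen {S : Set (Fin n)} {G : Matrix (Fin n) (Fin n) ℂ}
    (hG : IsGaussGenOn S G) : IsGaussGen G := by
  rcases hG with ⟨a, -, rfl⟩ | ⟨a, -, b, -, hab, rfl⟩ | ⟨a, -, b, -, hab, rfl⟩
  exacts [Or.inl ⟨a, rfl⟩, Or.inr (Or.inl ⟨a, b, hab, rfl⟩), Or.inr (Or.inr ⟨a, b, hab, rfl⟩)]

theorem IsGaussGenOn.mulVec_eq_self {S : Set (Fin n)} {G : Matrix (Fin n) (Fin n) ℂ}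
    (hG : IsGaussGenOn S G) {v : Fin n → ℂ} (hv : ∀ j ∈ S, v j = 0) : G *ᵥ v = v := by
  rcases hG with ⟨a, ha, rfl⟩ | ⟨a, ha, b, hb, hab, rfl⟩ | ⟨a, ha, b, hb, hab, rfl⟩
  · exact levelOp_mulVec_eq_self (Function.injective_of_subsingleton _) _ (by simp [hv a ha])
  all_goals
    exact levelOp_mulVec_eq_self (injective_vec_pair hab) _
      (by simp [Fin.forall_fin_two, hv a ha, hv b hb])

theorem Imat_mem_unitaryGroup : !![I] ∈ unitaryGroup (Fin 1) ℂ := by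
  rw [mem_unitaryGroup_iff']
  ext i j
  fin_cases i; fin_cases j
  simp [mul_apply]

theorem Xmat_mem_unitaryGroup : Xmat ∈ unitaryGroup (Fin 2) ℂ := by
  rw [mem_unitaryGroup_iff']
  ext i j
  fin_cases i <;> fin_cases j <;> simp [Xmat, mul_apply]

theorem omegaHmat_mem_unitaryGroup : omegaHmat ∈ unitaryGroup (Fin 2) ℂ := by
  rw [mem_unitaryGroup_iff']
  ext i j
  fin_cases i <;> fin_cases j <;> simp [omegaHmat, mul_apply, map_ofNat] <;>
    linear_combination (-1 / 2 : ℂ) * I_sq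

theorem IsGaussGen.mem_unitaryGroup {G : Matrix (Fin n) (Fin n) ℂ} (hG : IsGaussGen G) :
    G ∈ unitaryGroup (Fin n) ℂ := by
  rcases hG with ⟨a, rfl⟩ | ⟨a, b, hab, rfl⟩ | ⟨a, b, hab, rfl⟩
  · exact levelOp_mem_unitaryGroup (Function.injective_of_subsingleton _) Imat_mem_unitaryGroup
  · exact levelOp_mem_unitaryGroup (injective_vec_pair hab) Xmat_mem_unitaryGroup
  · exact levelOp_mem_unitaryGroup (injective_vec_pair hab) omegaHmat_mem_unitaryGroup

theorem IsGaussGen.mem_matrix_dyadicGaussian {G : Matrix (Fin n) (Fin n) ℂ} (hG : IsGaussGen G) :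
    G ∈ dyadicGaussian.matrix := by
  have hI := I_mem_dyadicGaussian
  have hω : (1 + I) / 2 ∈ dyadicGaussian :=
    mul_mem (add_mem (one_mem _) hI) inv_two_mem_dyadicGaussian
  rcases hG with ⟨a, rfl⟩ | ⟨a, b, hab, rfl⟩ | ⟨a, b, hab, rfl⟩
  · refine levelOp_mem_matrix (Function.injective_of_subsingleton _) fun i j => ?_
    fin_cases i; fin_cases j
    simpa using hI
  · refine levelOp_mem_matrix (injective_vec_pair hab) fun i j => ?_
    fin_cases i <;> fin_cases j <;> simp [Xmat, zero_mem, one_mem]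
  · refine levelOp_mem_matrix (injective_vec_pair hab) fun i j => ?_
    fin_cases i <;> fin_cases j <;> simp [omegaHmat, hω]

end Gates

theorem sum_add_eq_sum_add_of_eq_off_pair {ι M : Type*} [Fintype ι] [DecidableEq ι]
    [AddCommMonoid M] {f g : ι → M} {a b : ι} (hab : a ≠ b)
    (h : ∀ j, j ≠ a → j ≠ b → f j = g j) : ∑ j, f j + (g a + g b) = ∑ j, g j + (f a + f b) := by
  have hsplit : ∀ φ : ι → M, ∑ j, φ j = ∑ j ∈ Finset.univ \ {a, b}, φ j + (φ a + φ b) :=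
    fun φ => by rw [← Finset.sum_pair hab, Finset.sum_sdiff (Finset.subset_univ _)]
  rw [hsplit f, hsplit g, Finset.sum_congr rfl fun j hj => h j ?_ ?_, add_right_comm]
  all_goals simp_all

theorem exists_ne_odd_of_even_sum {ι : Type*} [Fintype ι] [DecidableEq ι] {f : ι → ℤ}
    (hf : Even (∑ i, f i)) {a : ι} (ha : Odd (f a)) : ∃ b ≠ a, Odd (f b) := by
  by_contra! h
  rw [← Finset.add_sum_erase _ _ (Finset.mem_univ a), Int.even_add] at hf
  refine Int.not_even_iff_odd.2 ha (hf.2 (Finset.even_sum _ fun b hb => ?_))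
  exact Int.not_odd_iff_even.1 (h b (Finset.ne_of_mem_erase hb))

section ColumnReduction

open Finset

variable {n : ℕ} {S : Set (Fin n)}

theorem levelOp_I_pow_mulVec_toComplex (b : Fin n) (s : ℕ) (u : Fin n → ℤ[i]) :
    levelOp ![b] !![I] ^ s *ᵥ (GaussianInt.toComplex ∘ u) =
      GaussianInt.toComplex ∘ Function.update u b (⟨0, 1⟩ ^ s * u b) := by
  rw [levelOp_I_pow_mulVec, Function.comp_update, map_mul, map_pow,
    GaussianInt.toComplex_def']
  simp

theorem levelOp_omegaHmat_mulVec_toComplex {a b : Fin n} (hab : a ≠ b) {u : Fin n → ℤ[i]}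
    {w₁ w₂ : ℤ[i]} (h₁ : u a + u b = 2 * w₁) (h₂ : u a - u b = 2 * w₂) :
    levelOp ![a, b] omegaHmat *ᵥ (GaussianInt.toComplex ∘ u) = GaussianInt.toComplex ∘
      Function.update (Function.update u a (⟨1, 1⟩ * w₁)) b (⟨1, 1⟩ * w₂) := by
  replace h₁ := congrArg GaussianInt.toComplex h₁
  replace h₂ := congrArg GaussianInt.toComplex h₂
  simp only [map_add, map_sub, map_mul, map_ofNat] at h₁ h₂
  rw [levelOp_omegaHmat_mulVec hab, Function.comp_update, Function.comp_update, map_mul, map_mul,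
    GaussianInt.toComplex_one_add_I, Function.comp_apply, Function.comp_apply, h₁, h₂]
  ring_nf

theorem exists_gates_mulVec_eq_update_pair {u : Fin n → ℤ[i]} {a b : Fin n} (haS : a ∈ S)
    (hbS : b ∈ S) (hab : a ≠ b) (ha : Odd (u a).norm) (hb : Odd (u b).norm) :
    ∃ (P : List (Matrix (Fin n) (Fin n) ℂ)) (x y : ℤ[i]), (∀ G ∈ P, IsGaussGenOn S G) ∧
      P.prod *ᵥ (GaussianInt.toComplex ∘ u) = GaussianInt.toComplex ∘
        Function.update (Function.update u a (⟨1, 1⟩ * x)) b (⟨1, 1⟩ * y) ∧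
      (⟨1, 1⟩ * x : ℤ[i]).norm + (⟨1, 1⟩ * y : ℤ[i]).norm = (u a).norm + (u b).norm := by
  obtain ⟨s, y, hy⟩ := GaussianInt.exists_two_dvd_sub_I_pow_mul ha hb
  set v := (⟨0, 1⟩ : ℤ[i]) ^ s * u b
  have hx : u a + v = 2 * (y + v) := by linear_combination hy
  refine ⟨levelOp ![a, b] omegaHmat :: List.replicate s (levelOp ![b] !![I]), y + v, y, ?_, ?_, ?_⟩
  · simp only [List.mem_cons, List.mem_replicate]
    rintro G (rfl | ⟨-, rfl⟩)
    exacts [Or.inr (Or.inr ⟨a, haS, b, hbS, hab, rfl⟩), Or.inl ⟨b, hbS, rfl⟩]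
  · rw [List.prod_cons, List.prod_replicate, ← mulVec_mulVec, levelOp_I_pow_mulVec_toComplex,
      levelOp_omegaHmat_mulVec_toComplex hab (by simpa [hab] using hx) (by simpa [hab] using hy),
      Function.update_comm hab.symm, Function.update_idem]
  · rw [GaussianInt.norm_one_add_I_mul_add_norm hx hy, GaussianInt.norm_I_pow_mul]

theorem exists_pairing_step {u : Fin n → ℤ[i]} (hS : ∀ j ∉ S, u j = 0) {a b : Fin n}
    (hab : a ≠ b) (ha : Odd (u a).norm) (hb : Odd (u b).norm) :
    ∃ (P : List (Matrix (Fin n) (Fin n) ℂ)) (u' : Fin n → ℤ[i]), (∀ G ∈ P, IsGaussGenOn S G) ∧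
      P.prod *ᵥ (GaussianInt.toComplex ∘ u) = GaussianInt.toComplex ∘ u' ∧
      (∀ j ∉ S, u' j = 0) ∧ ∑ j, (u' j).norm = ∑ j, (u j).norm ∧
      #{j | Odd (u' j).norm} < #{j | Odd (u j).norm} := by
  have hmem : ∀ {j}, Odd (u j).norm → j ∈ S := fun {j} h => by
    by_contra hj
    simp [hS j hj] at h
  obtain ⟨P, x, y, hP, hPu, hnorm⟩ :=
    exists_gates_mulVec_eq_update_pair (hmem ha) (hmem hb) hab ha hb
  set u' := Function.update (Function.update u a (⟨1, 1⟩ * x)) b (⟨1, 1⟩ * y)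
  have hu'a : u' a = ⟨1, 1⟩ * x := by simp [u', hab]
  have hu'b : u' b = ⟨1, 1⟩ * y := by simp [u']
  have hu' : ∀ j, j ≠ a → j ≠ b → u' j = u j := fun j hja hjb => by simp [u', hja, hjb]
  refine ⟨P, u', hP, hPu, fun j hj => ?_, ?_, ?_⟩
  · rw [hu' j (fun h => hj (h ▸ hmem ha)) (fun h => hj (h ▸ hmem hb)), hS j hj]
  · have hsum := sum_add_eq_sum_add_of_eq_off_pair (f := fun j => (u' j).norm)
      (g := fun j => (u j).norm) hab fun j hja hjb => by rw [hu' j hja hjb]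
    rw [hu'a, hu'b, hnorm] at hsum
    exact add_right_cancel hsum
  · have hcount := sum_add_eq_sum_add_of_eq_off_pair
      (f := fun j => if Odd (u' j).norm then 1 else 0)
      (g := fun j => if Odd (u j).norm then 1 else 0) hab fun j hja hjb => by rw [hu' j hja hjb]
    simp only [hu'a, hu'b, GaussianInt.norm_one_add_I_mul, ha, hb,
      Int.not_odd_iff_even.2 (even_two_mul _), if_true, if_false] at hcount
    rw [card_filter, card_filter]
    omega

theorem exists_gates_mulVec_eq_single_of_sum_norm_eq_one {c : Fin n} (hc : c ∈ S)
    {u : Fin n → ℤ[i]} (hS : ∀ j ∉ S, u j = 0) (hu : ∑ j, (u j).norm = 1) :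
    ∃ L : List (Matrix (Fin n) (Fin n) ℂ), (∀ G ∈ L, IsGaussGenOn S G) ∧
      L.prod *ᵥ (GaussianInt.toComplex ∘ u) = Pi.single c 1 := by
  obtain ⟨j₀, hj₀⟩ : ∃ j₀, u j₀ ≠ 0 := by
    by_contra! h
    simp [h] at hu
  have hj₀S : j₀ ∈ S := by_contra fun h => hj₀ (hS j₀ h)
  have hsplit := Finset.add_sum_erase univ (fun j => (u j).norm) (mem_univ j₀)
  have hrest : 0 ≤ ∑ j ∈ univ.erase j₀, (u j).norm :=
    sum_nonneg fun j _ => GaussianInt.norm_nonneg (u j)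
  have hnorm : (u j₀).norm = 1 := by
    have := GaussianInt.norm_pos.2 hj₀
    omega
  have hzero : ∀ j ≠ j₀, u j = 0 := fun j hj => GaussianInt.norm_eq_zero.1 <|
    (sum_eq_zero_iff_of_nonneg fun j _ => GaussianInt.norm_nonneg (u j)).1 (by omega) j
      (mem_erase.2 ⟨hj, mem_univ j⟩)
  obtain ⟨t, ht⟩ := GaussianInt.exists_I_pow_mul_eq_one hnorm
  have hrot : levelOp ![j₀] !![I] ^ t *ᵥ (GaussianInt.toComplex ∘ u) = Pi.single j₀ 1 := by
    rw [levelOp_I_pow_mulVec_toComplex, ht]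
    funext j
    by_cases hj : j = j₀
    · subst hj
      simp
    · simp [hj, hzero j hj]
  by_cases hj₀c : j₀ = c
  · subst hj₀c
    refine ⟨List.replicate t (levelOp ![j₀] !![I]), ?_, by rwa [List.prod_replicate]⟩
    simp only [List.mem_replicate]
    rintro G ⟨-, rfl⟩
    exact Or.inl ⟨j₀, hj₀S, rfl⟩
  · refine ⟨levelOp ![c, j₀] Xmat :: List.replicate t (levelOp ![j₀] !![I]), ?_, ?_⟩
    · simp only [List.mem_cons, List.mem_replicate]
      rintro G (rfl | ⟨-, rfl⟩)
      exacts [Or.inr (Or.inl ⟨c, hc, j₀, hj₀S, Ne.symm hj₀c, rfl⟩), Or.inl ⟨j₀, hj₀S, rfl⟩]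
    · rw [List.prod_cons, List.prod_replicate, ← mulVec_mulVec, hrot,
        levelOp_Xmat_mulVec_single (Ne.symm hj₀c)]

theorem exists_gates_mulVec_eq_single {c : Fin n} (hc : c ∈ S) (k : ℕ) {u : Fin n → ℤ[i]}
    (hS : ∀ j ∉ S, u j = 0) (hu : ∑ j, (u j).norm = 2 ^ k) :
    ∃ L : List (Matrix (Fin n) (Fin n) ℂ), (∀ G ∈ L, IsGaussGenOn S G) ∧
      L.prod *ᵥ ((1 + I) ^ k)⁻¹ • (GaussianInt.toComplex ∘ u) = Pi.single c 1 := by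
  induction k generalizing u with
  | zero => simpa using exists_gates_mulVec_eq_single_of_sum_norm_eq_one hc hS (by simpa using hu)
  | succ k ih =>
    induction hcount : #{j | Odd (u j).norm} using Nat.strong_induction_on generalizing u with
    | _ m ihm =>
    by_cases heven : ∀ j, Even (u j).norm
    · choose w hw using fun j => GaussianInt.one_add_I_dvd_of_even_norm (heven j)
      have hwS : ∀ j ∉ S, w j = 0 := fun j hj =>
        (mul_eq_zero.1 ((hw j).symm.trans (hS j hj))).resolve_left (by decide)
      have hw_sum : ∑ j, (w j).norm = 2 ^ k := by
        simp only [hw, GaussianInt.norm_one_add_I_mul, ← Finset.mul_sum, pow_succ] at hu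
        linarith
      obtain ⟨L, hL, hLw⟩ := ih hwS hw_sum
      refine ⟨L, hL, ?_⟩
      convert hLw using 2
      funext j
      have hlam : (1 + I : ℂ) ≠ 0 := by simp [Complex.ext_iff]
      simp only [Pi.smul_apply, Function.comp_apply, smul_eq_mul, hw j, map_mul,
        GaussianInt.toComplex_one_add_I, pow_succ, mul_inv, mul_assoc, inv_mul_cancel_left₀ hlam]
    · obtain ⟨a, ha⟩ : ∃ a, Odd (u a).norm := by simpa using heven
      obtain ⟨b, hba, hb⟩ := exists_ne_odd_of_even_sum (f := fun j => (u j).norm)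
        (by rw [hu, pow_succ']; exact even_two_mul _) ha
      obtain ⟨P, u', hP, hPu, hS', hsum, hlt⟩ := exists_pairing_step hS (Ne.symm hba) ha hb
      obtain ⟨L, hL, hLu⟩ := ihm _ (hcount ▸ hlt) hS' (hsum.trans hu) rfl
      refine ⟨L ++ P, fun G hG => ?_, ?_⟩
      · rcases List.mem_append.1 hG with hG | hG
        exacts [hL G hG, hP G hG]
      · rw [List.prod_append, ← mulVec_mulVec, mulVec_smul, hPu, hLu]

end ColumnReduction

theorem apply_eq_one_apply_of_col_eq_single {m α : Type*} [Fintype m] [DecidableEq m]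
    [CommRing α] [StarRing α] {V : Matrix m m α} (hV : V ∈ unitaryGroup m α) {i : m}
    (hi : (fun j => V j i) = Pi.single i 1) (k : m) : V i k = (1 : Matrix m m α) i k := by
  have hi' : ∀ j, V j i = (Pi.single i 1 : m → α) j := congr_fun hi
  rw [← mem_unitaryGroup_iff'.1 hV, mul_apply]
  simp [hi', Pi.single_apply, apply_ite star]

theorem sum_normSq_apply_of_mem_unitaryGroup {m : Type*} [Fintype m] [DecidableEq m]
    {V : Matrix m m ℂ} (hV : V ∈ unitaryGroup m ℂ) (k : m) : ∑ j, normSq (V j k) = 1 := by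
  have h := congrFun₂ (mem_unitaryGroup_iff'.1 hV) k k
  simp only [mul_apply, star_apply, one_apply_eq] at h
  exact_mod_cast (by simpa [normSq_eq_conj_mul_self] using h : ((∑ j, normSq (V j k) : ℝ) : ℂ) = 1)

section MainInduction

variable {n : ℕ}

theorem list_prod_mulVec_eq_self_of_isGaussGenOn {S : Set (Fin n)}
    {L : List (Matrix (Fin n) (Fin n) ℂ)} (hL : ∀ G ∈ L, IsGaussGenOn S G) {v : Fin n → ℂ}
    (hv : ∀ j ∈ S, v j = 0) : L.prod *ᵥ v = v := by
  induction L with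
  | nil => simp
  | cons G L ih =>
    rw [List.prod_cons, ← mulVec_mulVec, ih fun G hG => hL G (List.mem_cons_of_mem _ hG),
      (hL G List.mem_cons_self).mulVec_eq_self hv]

theorem exists_gates_mulVec_col_eq_single {V : Matrix (Fin n) (Fin n) ℂ}
    (hV : V ∈ unitaryGroup (Fin n) ℂ) (hD : V ∈ dyadicGaussian.matrix) (c : Fin n)
    (hzero : ∀ j < c, V j c = 0) :
    ∃ L : List (Matrix (Fin n) (Fin n) ℂ), (∀ G ∈ L, IsGaussGenOn (Set.Ici c) G) ∧
      L.prod *ᵥ (fun j => V j c) = Pi.single c 1 := by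
  obtain ⟨K, u, hu⟩ := exists_pow_mul_eq_toComplex fun j => hD j c
  have hlam : (1 + I : ℂ) ^ K ≠ 0 := pow_ne_zero _ (by simp [Complex.ext_iff])
  have hcol : (fun j => V j c) = ((1 + I) ^ K)⁻¹ • (GaussianInt.toComplex ∘ u) :=
    funext fun j => (eq_inv_mul_iff_mul_eq₀ hlam).2 (hu j)
  have hS : ∀ j ∉ Set.Ici c, u j = 0 := fun j hj => by
    rw [← GaussianInt.toComplex_eq_zero, ← hu, hzero j (not_le.1 hj), mul_zero]
  have hsum : ∑ j, (u j).norm = 2 ^ K := by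
    have hnormSq : normSq (1 + I) = 2 := by norm_num [normSq_apply]
    have : ∑ j, ((u j).norm : ℝ) = 2 ^ K := by
      simp only [GaussianInt.intCast_real_norm, ← hu, map_mul, map_pow, hnormSq, ← Finset.mul_sum,
        sum_normSq_apply_of_mem_unitaryGroup hV, mul_one]
    exact_mod_cast this
  rw [hcol]
  exact exists_gates_mulVec_eq_single Set.self_mem_Ici K hS hsum

theorem exists_gates_mul_eq_one_of_cols_eq_single (c : Fin (n + 1))
    {V : Matrix (Fin n) (Fin n) ℂ} (hV : V ∈ unitaryGroup (Fin n) ℂ)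
    (hD : V ∈ dyadicGaussian.matrix)
    (hcols : ∀ k : Fin n, k.castSucc < c → (fun j => V j k) = Pi.single k 1) :
    ∃ L : List (Matrix (Fin n) (Fin n) ℂ), (∀ G ∈ L, IsGaussGen G) ∧ L.prod * V = 1 := by
  induction c using Fin.reverseInduction generalizing V with
  | last =>
    refine ⟨[], by simp, ?_⟩
    ext j k
    simpa [one_apply, Pi.single_apply] using congrFun (hcols k (Fin.castSucc_lt_last k)) j
  | cast c ih =>
    obtain ⟨L, hL, hLc⟩ := exists_gates_mulVec_col_eq_single hV hD c fun j hj => by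
      rw [apply_eq_one_apply_of_col_eq_single hV (hcols j (Fin.castSucc_lt_castSucc_iff.2 hj)),
        one_apply_ne hj.ne]
    have hLU : L.prod ∈ unitaryGroup (Fin n) ℂ :=
      Submonoid.list_prod_mem _ fun G hG => (hL G hG).isGaussGen.mem_unitaryGroup
    have hLD : L.prod ∈ dyadicGaussian.matrix :=
      Subring.list_prod_mem _ fun G hG => (hL G hG).isGaussGen.mem_matrix_dyadicGaussian
    obtain ⟨L', hL', hL'V⟩ := ih (mul_mem hLU hV) (mul_mem hLD hD) fun k hk => by
      change L.prod *ᵥ (fun j => V j k) = Pi.single k 1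
      rcases (Fin.castSucc_lt_succ_iff.1 hk).lt_or_eq with hk | rfl
      · rw [hcols k (Fin.castSucc_lt_castSucc_iff.2 hk)]
        exact list_prod_mulVec_eq_self_of_isGaussGenOn hL fun j hj =>
          Pi.single_eq_of_ne (hk.trans_le hj).ne' 1
      · exact hLc
    refine ⟨L' ++ L, fun G hG => ?_, by rw [List.prod_append, mul_assoc, hL'V]⟩
    rcases List.mem_append.1 hG with hG | hG
    exacts [hL' G hG, (hL G hG).isGaussGen]

end MainInduction

theorem stmt4_general (n : ℕ) (V : Matrix (Fin n) (Fin n) ℂ)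
    (hV : V ∈ Matrix.unitaryGroup (Fin n) ℂ)
    (hR : ∀ j k, InDi (V j k)) :
    ∃ L : List (Matrix (Fin n) (Fin n) ℂ),
      (∀ G ∈ L, IsGaussGen G) ∧ L.prod * V = 1 :=
  exists_gates_mul_eq_one_of_cols_eq_single 0 hV (fun j k => (hR j k).mem_dyadicGaussian)
    fun _ hk => absurd hk (Fin.not_lt_zero _)

/-- Every unitary matrix with entries in `ℤ[1/2, i]` is a product of the
generators `i_[a]`, `X_[a,b]`, `(ωH)_[a,b]`. -/
theorem stmt4 (n : ℕ) (hn : 1 ≤ n) (V : Matrix (Fin n) (Fin n) ℂ)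
    (hV : V ∈ Matrix.unitaryGroup (Fin n) ℂ)
    (hR : ∀ j k, InDi (V j k)) :
    ∃ L : List (Matrix (Fin n) (Fin n) ℂ),
      (∀ G ∈ L, IsGaussGen G) ∧ L.prod * V = 1 :=
  stmt4_general n V hV hR
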